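/- arXiv:2001.04411 — 2 statements merged into one kernel-verified Lean document; each statement's English description precedes it below -/
import Mathlib

section
/- With the setup of ≤_O, suppose additionally that W_I is finite with longest element w_{0,I}, and set L = I∪J∪K. Then the set of minimal-length coset elements intersected with W_L equals {u v* : u, v ∈ W_I, u ≤_R w_{0,I} v}, where ≤_R is the right weak order. -/
/-!
Inside `W_{I∪J∪K}`, which is the direct product `W_I × W_J × W_K`, lengths add, `x ↦ x*` preserves
length, and every element of `W_I` is a minimal representative modulo `W_{J∪K}`. So if
`z = w a (x x*)` lies in `M ∩ W_{I∪J∪K}` with `w ∈ W^{J∪K}`, then `w ∈ W_I`, and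
`ℓ(z) = ℓ(wx) + ℓ(x) + ℓ(a) = ℓ(w) ≤ ℓ(wx) + ℓ(x)` forces `a = 1` and, with `u = wx`, `v = x`,
`ℓ(u v⁻¹) = ℓ(u) + ℓ(v)`; conversely such `u, v` give `u v* ∈ M`. Since
`ℓ(w_{0,I} y) = ℓ(w_{0,I}) - ℓ(y)` for `y ∈ W_I`, that length condition is `u ≤_R w_{0,I} v`.

Lengths are counted by right inversion sets `N(w)`. Tits' permutation representation on
`W × ZMod 2` gives a cocycle `n(w, t)` with `N(w) = {t | n(w, t) = 1}`, whence the strong exchange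
condition and `N(ab) = N(b) ∆ b⁻¹ N(a) b`. This makes lengths additive over parabolic subgroups
meeting trivially, and as `N(w_{0,I})` is the set of all reflections of `W_I`, it gives
`N(w_{0,I} y) = N(w_{0,I}) \ N(y)`.
-/

section BruhatSetup

variable {B : Type*} {W : Type*} [Group W] {M : CoxeterMatrix B}

/-- Strong Bruhat order: `u ≤ v` iff every reduced word for `v` has a sublist
that is a reduced word for `u`. -/
def BruhatLE (cs : CoxeterSystem M W) (u v : W) : Prop :=
  ∀ ω : List B, cs.IsReduced ω → cs.wordProd ω = v →
    ∃ ω' : List B, List.Sublist ω' ω ∧ cs.IsReduced ω' ∧ cs.wordProd ω' = u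

/-- Strict strong Bruhat order. -/
def BruhatLT (cs : CoxeterSystem M W) (u v : W) : Prop :=
  BruhatLE cs u v ∧ u ≠ v

/-- The standard parabolic subgroup `W_L` generated by the simple reflections in `L`. -/
def parab (cs : CoxeterSystem M W) (L : Set B) : Subgroup W :=
  Subgroup.closure (cs.simple '' L)

/-- The set `W^L` of minimal length coset representatives for `W / W_L`. -/
def minReps (cs : CoxeterSystem M W) (L : Set B) : Set W :=
  {w : W | ∀ i ∈ L, cs.length w < cs.length (w * cs.simple i)}

/-- Right weak order: `v ≤_R w` iff `ℓ(w) = ℓ(w v⁻¹) + ℓ(v)`. -/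
def leR (cs : CoxeterSystem M W) (v w : W) : Prop :=
  cs.length w = cs.length (w * v⁻¹) + cs.length v

/-- The setup of the order `≤_O`: `I`, `J`, `K` are pairwise disjoint and pairwise
disconnected subsets of the simple system (so that `W_{I∪J∪K} = W_I × W_J × W_K`),
and `σ : x ↦ x*` restricts to an isomorphism of Coxeter groups `W_I → W_J`
(a bijective group homomorphism sending simple reflections to simple reflections). -/
structure GoodSetup (cs : CoxeterSystem M W) (I J K : Set B) (σ : W → W) : Prop where
  disjIJ : Disjoint I J
  disjIK : Disjoint I K
  disjJK : Disjoint J K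
  commIJ : ∀ i ∈ I, ∀ j ∈ J, Commute (cs.simple i) (cs.simple j)
  commIK : ∀ i ∈ I, ∀ k ∈ K, Commute (cs.simple i) (cs.simple k)
  commJK : ∀ j ∈ J, ∀ k ∈ K, Commute (cs.simple j) (cs.simple k)
  directProd : ∀ x ∈ parab cs I, ∀ y ∈ parab cs J, ∀ z ∈ parab cs K,
    x * y * z = 1 → x = 1 ∧ y = 1 ∧ z = 1
  mulSigma : ∀ x ∈ parab cs I, ∀ y ∈ parab cs I, σ (x * y) = σ x * σ y
  bijSigma : Set.BijOn σ (parab cs I : Set W) (parab cs J : Set W)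
  simpleSigma : ∀ i ∈ I, ∃ j ∈ J, σ (cs.simple i) = cs.simple j

/-- Membership in the coset `[w] = w · W_K · W_{I,J}` where `W_{I,J} = {x x* : x ∈ W_I}`. -/
def inCoset (cs : CoxeterSystem M W) (I K : Set B) (σ : W → W) (w u : W) : Prop :=
  ∃ a ∈ parab cs K, ∃ x ∈ parab cs I, u = w * a * (x * σ x)

/-- The relation `≤_O`: `w' ≤_O w` iff some `u ∈ [w']` satisfies `u ≤ w` in Bruhat order. -/
def leO (cs : CoxeterSystem M W) (I K : Set B) (σ : W → W) (w' w : W) : Prop :=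
  ∃ u, inCoset cs I K σ w' u ∧ BruhatLE cs u w

/-- The strict relation associated to `≤_O`. -/
def ltO (cs : CoxeterSystem M W) (I K : Set B) (σ : W → W) (w' w : W) : Prop :=
  leO cs I K σ w' w ∧ w' ≠ w

/-- `Min(w)`: the elements of the coset `[w]` of length `ℓ(w)`. -/
def MinC (cs : CoxeterSystem M W) (I K : Set B) (σ : W → W) (w : W) : Set W :=
  {u : W | inCoset cs I K σ w u ∧ cs.length u = cs.length w}

/-- The set `M` of all elements having minimal length in their coset mod `W_K W_{I,J}`. -/
def Mset (cs : CoxeterSystem M W) (I J K : Set B) (σ : W → W) : Set W :=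
  {u : W | ∃ w ∈ minReps cs (J ∪ K), u ∈ MinC cs I K σ w}

lemma List.exists_map_eq_of_forall_mem_image {α β : Type*} {f : α → β} {S : Set α} {l : List β}
    (hl : ∀ b ∈ l, b ∈ f '' S) : ∃ l' : List α, (∀ a ∈ l', a ∈ S) ∧ l'.map f = l := by
  induction l with
  | nil => exact ⟨[], by simp, rfl⟩
  | cons b l ih =>
    obtain ⟨a, ha, rfl⟩ := hl b mem_cons_self
    obtain ⟨l', hl', rfl⟩ := ih fun b hb => hl b (mem_cons_of_mem _ hb)
    exact ⟨a :: l', by simpa [ha] using hl', rfl⟩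

namespace CoxeterSystem

open List
open scoped symmDiff

variable (cs : CoxeterSystem M W)

local prefix:100 "s" => cs.simple
local prefix:100 "π" => cs.wordProd
local prefix:100 "ℓ" => cs.length

lemma simple_mul_mul_simple_eq_iff (i : B) (t x : W) : s i * t * s i = x ↔ t = s i * x * s i := by
  constructor <;> rintro rfl <;> simp [mul_assoc]

lemma simple_mul_mul_simple_eq_simple_iff (i : B) (t : W) : s i * t * s i = s i ↔ t = s i := by
  rw [simple_mul_mul_simple_eq_iff, simple_mul_simple_cancel_right]

section Parity

variable [DecidableEq W]

/-- Tits' permutation representation on `T × {±1}`, extended to all of `W × ZMod 2` so that the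
set `T` of reflections never has to be formed. -/
def simpleFlip (i : B) : Equiv.Perm (W × ZMod 2) :=
  Function.Involutive.toPerm (fun p => (s i * p.1 * s i, p.2 + if p.1 = s i then 1 else 0)) <| by
    rintro ⟨t, e⟩
    simp only [simple_mul_mul_simple_eq_simple_iff, Prod.mk.injEq]
    refine ⟨by simp [← mul_assoc], ?_⟩
    split_ifs <;> simp [add_assoc, CharTwo.add_self_eq_zero]

lemma simpleFlip_apply (i : B) (t : W) (e : ZMod 2) :
    cs.simpleFlip i (t, e) = (s i * t * s i, e + if t = s i then 1 else 0) := rfl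

lemma simpleFlip_mul_pow_apply (i j : B) (k : ℕ) (t : W) (e : ZMod 2) :
    ((cs.simpleFlip i * cs.simpleFlip j) ^ k) (t, e) =
      ((s i * s j) ^ k * t * ((s i * s j) ^ k)⁻¹,
        e + ∑ r ∈ Finset.range (2 * k), if t = (s j * s i) ^ r * s j then 1 else 0) := by
  induction k generalizing t e with
  | zero => simp
  | succ k ih =>
    have hinv : s i * s j = (s j * s i)⁻¹ := by simp [mul_inv_rev]
    have hshift (r : ℕ) : s i * s j * ((s j * s i) ^ (r + 2) * s j) * (s i * s j)⁻¹ =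
        (s j * s i) ^ r * s j := by
      rw [hinv, inv_inv, pow_succ, pow_succ']
      simp [mul_assoc]
    have hconj : s i * (s j * t * s j) * s i = s i * s j * t * (s i * s j)⁻¹ := by
      simp [mul_assoc]
    have hterm (r : ℕ) : (s i * s j * t * (s i * s j)⁻¹ = (s j * s i) ^ r * s j) ↔
        t = (s j * s i) ^ (r + 2) * s j := by
      rw [← hshift r, mul_left_inj, mul_right_inj]
    have hfirst : (s j * t * s j = s i) ↔ t = (s j * s i) ^ 1 * s j := by
      rw [pow_one, simple_mul_mul_simple_eq_iff]
    rw [pow_succ, Equiv.Perm.mul_apply, Equiv.Perm.mul_apply, simpleFlip_apply, simpleFlip_apply,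
      ih, hconj]
    refine Prod.ext (by simp [pow_succ, mul_assoc]) ?_
    simp only [hterm, hfirst, Nat.mul_succ, Finset.sum_range_succ', pow_zero, one_mul]
    ring

lemma isLiftable_simpleFlip : M.IsLiftable cs.simpleFlip := by
  intro i j
  have hperiod : (s j * s i) ^ M i j = 1 := by
    rw [M.symmetric]
    exact cs.simple_mul_simple_pow j i
  -- the reflections `(s j * s i) ^ r * s j` repeat with period `M i j`, so each is counted twice
  have hsum (t : W) : ∑ r ∈ Finset.range (2 * M i j),
      (if t = (s j * s i) ^ r * s j then (1 : ZMod 2) else 0) = 0 := by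
    rw [two_mul, Finset.sum_range_add]
    simp only [pow_add, hperiod, one_mul]
    exact CharTwo.add_self_eq_zero _
  ext ⟨t, e⟩ <;> simp [simpleFlip_mul_pow_apply, cs.simple_mul_simple_pow, hsum]

noncomputable def permRep : W →* Equiv.Perm (W × ZMod 2) :=
  cs.lift ⟨cs.simpleFlip, cs.isLiftable_simpleFlip⟩

lemma permRep_wordProd (ω : List B) (t : W) (e : ZMod 2) :
    cs.permRep (π ω) (t, e) =
      (π ω * t * (π ω)⁻¹, e + ((cs.rightInvSeq ω).count t : ZMod 2)) := by
  induction ω generalizing e with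
  | nil => simp
  | cons i ω ih =>
    have hconj : π ω * t * (π ω)⁻¹ = s i ↔ (π ω)⁻¹ * s i * π ω = t := by
      constructor
      · intro h
        rw [← h]
        group
      · rintro rfl
        group
    rw [wordProd_cons, map_mul, Equiv.Perm.mul_apply, ih, permRep, lift_apply_simple,
      simpleFlip_apply, rightInvSeq, count_cons]
    refine Prod.ext (by simp [mul_assoc]) ?_
    simp only [beq_iff_eq, ← hconj]
    split_ifs <;> simp [add_assoc]

noncomputable def inversionParity (w t : W) : ZMod 2 := (cs.permRep w (t, 0)).2

lemma inversionParity_wordProd (ω : List B) (t : W) :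
    cs.inversionParity (π ω) t = ((cs.rightInvSeq ω).count t : ZMod 2) := by
  simp [inversionParity, permRep_wordProd]

lemma permRep_apply (w t : W) (e : ZMod 2) :
    cs.permRep w (t, e) = (w * t * w⁻¹, e + cs.inversionParity w t) := by
  obtain ⟨ω, rfl⟩ := cs.wordProd_surjective w
  rw [permRep_wordProd, inversionParity_wordProd]

lemma inversionParity_mul (a b t : W) :
    cs.inversionParity (a * b) t =
      cs.inversionParity b t + cs.inversionParity a (b * t * b⁻¹) := by
  change (cs.permRep (a * b) (t, 0)).2 = _
  rw [map_mul, Equiv.Perm.mul_apply, permRep_apply, permRep_apply, zero_add]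

lemma inversionParity_one (t : W) : cs.inversionParity 1 t = 0 := by
  simp [inversionParity]

lemma inversionParity_simple (i : B) (t : W) :
    cs.inversionParity (s i) t = if t = s i then 1 else 0 := by
  simp [inversionParity, permRep, simpleFlip_apply]

lemma inversionParity_self {t : W} (ht : cs.IsReflection t) : cs.inversionParity t t = 1 := by
  obtain ⟨u, i, rfl⟩ := ht
  have hconj : u⁻¹ * (u * s i * u⁻¹) * u⁻¹⁻¹ = s i := by group
  have hu : cs.inversionParity u⁻¹ (u * s i * u⁻¹) + cs.inversionParity u (s i) = 0 := by
    have h1 := cs.inversionParity_mul u u⁻¹ (u * s i * u⁻¹)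
    rwa [mul_inv_cancel, hconj, inversionParity_one, eq_comm] at h1
  rw [inversionParity_mul, hconj, inversionParity_mul, inversionParity_simple, if_pos rfl,
    simple_mul_simple_self, one_mul, inv_simple]
  linear_combination hu

lemma mem_rightInvSeq_of_inversionParity_eq_one {ω : List B} {t : W}
    (h : cs.inversionParity (π ω) t = 1) : t ∈ cs.rightInvSeq ω := by
  by_contra hmem
  simp [inversionParity_wordProd, count_eq_zero_of_not_mem hmem] at h

lemma isRightInversion_of_inversionParity_eq_one {w t : W} (h : cs.inversionParity w t = 1) :
    cs.IsRightInversion w t := by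
  obtain ⟨ω, hω, rfl⟩ := cs.exists_isReduced w
  exact cs.isRightInversion_of_mem_rightInvSeq hω (cs.mem_rightInvSeq_of_inversionParity_eq_one h)

lemma isRightInversion_iff_inversionParity_eq_one {w t : W} :
    cs.IsRightInversion w t ↔ cs.inversionParity w t = 1 := by
  refine ⟨fun ht => ?_, cs.isRightInversion_of_inversionParity_eq_one⟩
  by_contra hw
  have hw0 : cs.inversionParity w t = 0 := by
    revert hw
    generalize cs.inversionParity w t = x
    revert x
    decide
  have hwt : cs.inversionParity (w * t) t = 1 := by
    rw [inversionParity_mul, inversionParity_self cs ht.1, ht.1.mul_self, one_mul, ht.1.inv, hw0,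
      add_zero]
  have hlt := (cs.isRightInversion_of_inversionParity_eq_one hwt).2
  rw [mul_assoc, ht.1.mul_self, mul_one] at hlt
  exact lt_asymm hlt ht.2

end Parity

lemma isRightInversion_iff_mem_rightInvSeq {ω : List B} (hω : cs.IsReduced ω) {t : W} :
    cs.IsRightInversion (π ω) t ↔ t ∈ cs.rightInvSeq ω := by
  classical
  exact ⟨fun ht => cs.mem_rightInvSeq_of_inversionParity_eq_one
    (cs.isRightInversion_iff_inversionParity_eq_one.1 ht),
    cs.isRightInversion_of_mem_rightInvSeq hω⟩

def rightInversions (w : W) : Set W := {t | cs.IsRightInversion w t}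

lemma rightInversions_wordProd {ω : List B} (hω : cs.IsReduced ω) :
    cs.rightInversions (π ω) = {t | t ∈ cs.rightInvSeq ω} :=
  Set.ext fun _ => cs.isRightInversion_iff_mem_rightInvSeq hω

lemma finite_rightInversions (w : W) : (cs.rightInversions w).Finite := by
  obtain ⟨ω, hω, rfl⟩ := cs.exists_isReduced w
  rw [rightInversions_wordProd cs hω]
  exact (cs.rightInvSeq ω).finite_toSet

lemma ncard_rightInversions (w : W) : (cs.rightInversions w).ncard = ℓ w := by
  classical
  obtain ⟨ω, hω, rfl⟩ := cs.exists_isReduced w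
  rw [rightInversions_wordProd cs hω, ← coe_toFinset, Set.ncard_coe_finset,
    toFinset_card_of_nodup hω.nodup_rightInvSeq, length_rightInvSeq, hω.eq]

lemma rightInversions_mul (a b : W) :
    cs.rightInversions (a * b) =
      cs.rightInversions b ∆ (MulAut.conj b ⁻¹' cs.rightInversions a) := by
  classical
  ext t
  simp only [rightInversions, Set.mem_symmDiff, Set.mem_preimage, Set.mem_ofPred_eq,
    MulAut.conj_apply, isRightInversion_iff_inversionParity_eq_one, inversionParity_mul]
  generalize cs.inversionParity b t = x
  generalize cs.inversionParity a (b * t * b⁻¹) = y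
  revert x y
  decide

lemma ncard_conj_preimage (b : W) (S : Set W) : (MulAut.conj b ⁻¹' S).ncard = S.ncard :=
  Set.ncard_preimage_of_injective_subset_range (MulAut.conj b).injective
    (by simp [(MulAut.conj b).surjective.range_eq])

lemma length_mul_of_disjoint_rightInversions {a b : W}
    (h : Disjoint (cs.rightInversions b) (MulAut.conj b ⁻¹' cs.rightInversions a)) :
    ℓ (a * b) = ℓ a + ℓ b := by
  rw [← ncard_rightInversions, rightInversions_mul, (symmDiff_eq_sup _ _).2 h]
  change Set.ncard (_ ∪ _) = _
  rw [Set.ncard_union_eq h (cs.finite_rightInversions b)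
      ((cs.finite_rightInversions a).preimage (MulAut.conj b).injective.injOn),
    ncard_conj_preimage, ncard_rightInversions, ncard_rightInversions, add_comm]

variable {X Y : Set B}

lemma simple_mem_parab {i : B} (hi : i ∈ X) : s i ∈ parab cs X :=
  Subgroup.subset_closure ⟨i, hi, rfl⟩

lemma parab_mono (h : X ⊆ Y) : parab cs X ≤ parab cs Y :=
  Subgroup.closure_mono (Set.image_mono h)

lemma wordProd_mem_parab {ω : List B} (hω : ∀ i ∈ ω, i ∈ X) : π ω ∈ parab cs X := by
  induction ω with
  | nil => exact one_mem _
  | cons i ω ih =>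
    rw [wordProd_cons]
    exact mul_mem (cs.simple_mem_parab (hω i mem_cons_self))
      (ih fun j hj => hω j (mem_cons_of_mem i hj))

lemma exists_reduced_sublist_mul_simple {ω : List B} (hω : cs.IsReduced ω) (i : B) :
    ∃ ω', ω' <+ ω ++ [i] ∧ cs.IsReduced ω' ∧ π ω' = π ω * s i := by
  have hprod : π (ω ++ [i]) = π ω * s i := by rw [wordProd_append, wordProd_singleton]
  rcases cs.length_mul_simple (π ω) i with h | h
  · refine ⟨ω ++ [i], Sublist.refl _, ?_, hprod⟩
    rw [IsReduced, hprod, h, hω.eq, length_append, length_singleton]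
  · obtain ⟨j, hj, hget⟩ := getElem_of_mem <|
      (cs.isRightInversion_iff_mem_rightInvSeq hω).1 ⟨cs.isReflection_simple i, by omega⟩
    have herase : π (ω.eraseIdx j) = π ω * s i := by
      rw [← wordProd_mul_getD_rightInvSeq, getD_eq_getElem _ _ hj, hget]
    refine ⟨ω.eraseIdx j, (eraseIdx_sublist ω j).trans (sublist_append_left ω [i]), ?_, herase⟩
    have := length_eraseIdx_add_one (length_rightInvSeq cs ω ▸ hj)
    have := hω.eq
    rw [IsReduced, herase]
    omega

lemma exists_reduced_word_of_mem_parab {w : W} (hw : w ∈ parab cs X) :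
    ∃ ω : List B, (∀ i ∈ ω, i ∈ X) ∧ cs.IsReduced ω ∧ π ω = w := by
  have step : ∀ x, ∀ y ∈ cs.simple '' X,
      (∃ ω : List B, (∀ i ∈ ω, i ∈ X) ∧ cs.IsReduced ω ∧ π ω = x) →
      ∃ ω : List B, (∀ i ∈ ω, i ∈ X) ∧ cs.IsReduced ω ∧ π ω = x * y := by
    rintro x _ ⟨i, hi, rfl⟩ ⟨ω, hωX, hω, rfl⟩
    obtain ⟨ω', hsub, hω', hprod⟩ := cs.exists_reduced_sublist_mul_simple hω i
    refine ⟨ω', fun j hj => ?_, hω', hprod⟩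
    rcases mem_append.1 (hsub.subset hj) with hj | hj
    · exact hωX j hj
    · rwa [mem_singleton.1 hj]
  induction hw using Subgroup.closure_induction_right with
  | one => exact ⟨[], by simp, by simp [IsReduced], rfl⟩
  | mul_right x _ y hy ih => exact step x y hy ih
  | mul_inv_cancel x _ y hy ih =>
    obtain ⟨i, hi, rfl⟩ := hy
    rw [inv_simple]
    exact step x _ ⟨i, hi, rfl⟩ ih

lemma mem_parab_of_mem_rightInvSeq {ω : List B} (hω : ∀ i ∈ ω, i ∈ X) {t : W}
    (ht : t ∈ cs.rightInvSeq ω) : t ∈ parab cs X := by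
  induction ω with
  | nil => simp [rightInvSeq] at ht
  | cons i ω ih =>
    have hωX : ∀ j ∈ ω, j ∈ X := fun j hj => hω j (mem_cons_of_mem i hj)
    rcases mem_cons.1 ht with rfl | ht
    · have := cs.wordProd_mem_parab hωX
      exact mul_mem (mul_mem (inv_mem this) (cs.simple_mem_parab (hω i mem_cons_self))) this
    · exact ih hωX ht

lemma rightInversions_subset_parab {w : W} (hw : w ∈ parab cs X) :
    cs.rightInversions w ⊆ parab cs X := by
  obtain ⟨ω, hωX, hω, rfl⟩ := cs.exists_reduced_word_of_mem_parab hw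
  rw [rightInversions_wordProd cs hω]
  exact fun t => cs.mem_parab_of_mem_rightInvSeq hωX

lemma eq_one_of_mem_parab_of_mem_minReps {w : W} (hw : w ∈ parab cs X) (hmin : w ∈ minReps cs X) :
    w = 1 := by
  obtain ⟨ω, hωX, hω, rfl⟩ := cs.exists_reduced_word_of_mem_parab hw
  obtain rfl | ⟨ω, j, rfl⟩ := eq_nil_or_concat ω
  · rfl
  have hdesc := hmin j (hωX j (by simp))
  rw [wordProd_concat, simple_mul_simple_cancel_right, ← wordProd_concat, hω.eq,
    length_concat] at hdesc
  have := cs.length_wordProd_le ω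
  omega

lemma length_mul_of_disjoint_parab (hXY : Disjoint (parab cs X) (parab cs Y)) {p q : W}
    (hp : p ∈ parab cs X) (hq : q ∈ parab cs Y) : ℓ (p * q) = ℓ p + ℓ q := by
  refine cs.length_mul_of_disjoint_rightInversions (Set.disjoint_left.2 fun t htq htp => ?_)
  have htY := cs.rightInversions_subset_parab hq htq
  have hconj : q * t * q⁻¹ = 1 := Subgroup.disjoint_def.1 hXY
    (cs.rightInversions_subset_parab hp htp) (mul_mem (mul_mem hq htY) (inv_mem hq))
  rw [mul_inv_eq_one, mul_eq_left] at hconj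
  simpa [rightInversions, hconj] using htq.2

lemma parab_le_centralizer (hcomm : ∀ i ∈ X, ∀ j ∈ Y, Commute (s i) (s j)) :
    parab cs X ≤ Subgroup.centralizer (parab cs Y) := by
  rw [parab, parab, Subgroup.centralizer_closure, Subgroup.closure_le]
  rintro _ ⟨i, hi, rfl⟩
  rw [SetLike.mem_coe, Subgroup.mem_centralizer_iff]
  rintro _ ⟨j, hj, rfl⟩
  exact (hcomm i hi j hj).symm.eq

lemma exists_mul_eq_of_mem_parab_union (hcomm : ∀ i ∈ X, ∀ j ∈ Y, Commute (s i) (s j)) {w : W}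
    (hw : w ∈ parab cs (X ∪ Y)) : ∃ p ∈ parab cs X, ∃ q ∈ parab cs Y, p * q = w := by
  have hsup : parab cs (X ∪ Y) = parab cs X ⊔ parab cs Y := by
    rw [parab, Set.image_union, Subgroup.closure_union]
    rfl
  rwa [← SetLike.mem_coe, hsup, Subgroup.coe_mul_of_left_le_normalizer_right _ _
    ((cs.parab_le_centralizer hcomm).trans (Subgroup.centralizer_le_normalizer _))] at hw

def parabReflections (X : Set B) : Set W := {t | cs.IsReflection t ∧ t ∈ parab cs X}

lemma conj_preimage_parabReflections {y : W} (hy : y ∈ parab cs X) :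
    MulAut.conj y ⁻¹' cs.parabReflections X = cs.parabReflections X := by
  ext t
  simp only [parabReflections, Set.mem_preimage, Set.mem_ofPred_eq, MulAut.conj_apply,
    isReflection_conj_iff, Subgroup.mul_mem_cancel_right _ (inv_mem hy),
    Subgroup.mul_mem_cancel_left _ hy]

lemma rightInversions_longest {w₀ : W} (h₀ : w₀ ∈ parab cs X)
    (hmax : ∀ x ∈ parab cs X, ℓ x ≤ ℓ w₀) : cs.rightInversions w₀ = cs.parabReflections X := by
  refine Set.Subset.antisymm (fun t ht => ⟨ht.1, cs.rightInversions_subset_parab h₀ ht⟩) ?_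
  rintro t ⟨ht, htX⟩
  exact ⟨ht, lt_of_le_of_ne (hmax _ (mul_mem h₀ htX)) (ht.length_mul_left_ne w₀)⟩

lemma length_longest_mul_add {w₀ : W} (h₀ : w₀ ∈ parab cs X)
    (hmax : ∀ x ∈ parab cs X, ℓ x ≤ ℓ w₀) {y : W} (hy : y ∈ parab cs X) :
    ℓ (w₀ * y) + ℓ y = ℓ w₀ := by
  have hsub : cs.rightInversions y ⊆ cs.parabReflections X :=
    fun t ht => ⟨ht.1, cs.rightInversions_subset_parab hy ht⟩
  have hfin : (cs.parabReflections X).Finite :=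
    cs.rightInversions_longest h₀ hmax ▸ cs.finite_rightInversions w₀
  rw [← ncard_rightInversions, ← ncard_rightInversions, ← ncard_rightInversions,
    rightInversions_mul, cs.rightInversions_longest h₀ hmax, conj_preimage_parabReflections cs hy,
    symmDiff_of_le hsub]
  exact Set.ncard_sdiff_add_ncard_of_subset hsub hfin

lemma leR_longest_mul_iff {w₀ : W} (h₀ : w₀ ∈ parab cs X)
    (hmax : ∀ x ∈ parab cs X, ℓ x ≤ ℓ w₀) {u v : W} (hu : u ∈ parab cs X) (hv : v ∈ parab cs X) :
    leR cs u (w₀ * v) ↔ ℓ (u * v⁻¹) = ℓ u + ℓ v := by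
  have hv' := cs.length_longest_mul_add h₀ hmax hv
  have huv := cs.length_longest_mul_add h₀ hmax (inv_mem (mul_mem hu (inv_mem hv)))
  rw [length_inv] at huv
  rw [leR, show w₀ * v * u⁻¹ = w₀ * (u * v⁻¹)⁻¹ by group]
  omega

end CoxeterSystem

namespace GoodSetup

open CoxeterSystem

variable {cs : CoxeterSystem M W} {I J K : Set B} {σ : W → W}

local prefix:100 "s" => cs.simple
local prefix:100 "π" => cs.wordProd
local prefix:100 "ℓ" => cs.length

lemma commute_I_JK (h : GoodSetup cs I J K σ) : ∀ i ∈ I, ∀ j ∈ J ∪ K, Commute (s i) (s j) := by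
  rintro i hi j (hj | hj)
  exacts [h.commIJ i hi j hj, h.commIK i hi j hj]

lemma exists_mul_mul_eq (h : GoodSetup cs I J K σ) {w : W} (hw : w ∈ parab cs (I ∪ J ∪ K)) :
    ∃ p ∈ parab cs I, ∃ q ∈ parab cs J, ∃ r ∈ parab cs K, p * q * r = w := by
  rw [Set.union_assoc] at hw
  obtain ⟨p, hp, qr, hqr, rfl⟩ := cs.exists_mul_eq_of_mem_parab_union h.commute_I_JK hw
  obtain ⟨q, hq, r, hr, rfl⟩ := cs.exists_mul_eq_of_mem_parab_union h.commJK hqr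
  exact ⟨p, hp, q, hq, r, hr, mul_assoc _ _ _⟩

lemma disjoint_parab_J_K (h : GoodSetup cs I J K σ) : Disjoint (parab cs J) (parab cs K) :=
  Subgroup.disjoint_def.2 fun hx hx' =>
    (h.directProd 1 (one_mem _) _ hx _ (inv_mem hx') (by group)).2.1

lemma disjoint_parab_I_JK (h : GoodSetup cs I J K σ) :
    Disjoint (parab cs I) (parab cs (J ∪ K)) := by
  refine Subgroup.disjoint_def.2 fun {x} hx hx' => ?_
  obtain ⟨q, hq, r, hr, rfl⟩ := cs.exists_mul_eq_of_mem_parab_union h.commJK hx'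
  exact inv_eq_one.1 (h.directProd _ (inv_mem hx) q hq r hr (by group)).1

lemma length_mul_mul (h : GoodSetup cs I J K σ) {p q r : W} (hp : p ∈ parab cs I)
    (hq : q ∈ parab cs J) (hr : r ∈ parab cs K) : ℓ (p * q * r) = ℓ p + ℓ q + ℓ r := by
  have hqr : q * r ∈ parab cs (J ∪ K) := mul_mem (cs.parab_mono Set.subset_union_left hq)
    (cs.parab_mono Set.subset_union_right hr)
  rw [mul_assoc, cs.length_mul_of_disjoint_parab h.disjoint_parab_I_JK hp hqr,
    cs.length_mul_of_disjoint_parab h.disjoint_parab_J_K hq hr, add_assoc]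

lemma mem_minReps_of_mem_parab (h : GoodSetup cs I J K σ) {p : W} (hp : p ∈ parab cs I) :
    p ∈ minReps cs (J ∪ K) := fun j hj => by
  rw [cs.length_mul_of_disjoint_parab h.disjoint_parab_I_JK hp (cs.simple_mem_parab hj),
    length_simple]
  omega

lemma mul_mul_eq_of_mem_minReps (h : GoodSetup cs I J K σ) {p q r : W} (hp : p ∈ parab cs I)
    (hq : q ∈ parab cs J) (hr : r ∈ parab cs K) (hw : p * q * r ∈ minReps cs (J ∪ K)) :
    p * q * r = p := by
  have hq1 : q = 1 := cs.eq_one_of_mem_parab_of_mem_minReps hq fun j hj => by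
    have hcomm : r * s j = s j * r := Subgroup.mem_centralizer_iff.1
      (cs.parab_le_centralizer h.commJK (cs.simple_mem_parab hj)) r hr
    have := hw j (Or.inl hj)
    rw [mul_assoc (p * q), hcomm,
      show p * q * (s j * r) = p * (q * s j) * r by simp only [mul_assoc],
      h.length_mul_mul hp hq hr,
      h.length_mul_mul hp (mul_mem hq (cs.simple_mem_parab hj)) hr] at this
    omega
  have hr1 : r = 1 := cs.eq_one_of_mem_parab_of_mem_minReps hr fun k hk => by
    have := hw k (Or.inr hk)
    rw [mul_assoc (p * q), h.length_mul_mul hp hq hr,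
      h.length_mul_mul hp hq (mul_mem hr (cs.simple_mem_parab hk))] at this
    omega
  rw [hq1, hr1, mul_one, mul_one]

lemma sigma_mem (h : GoodSetup cs I J K σ) {x : W} (hx : x ∈ parab cs I) : σ x ∈ parab cs J :=
  h.bijSigma.mapsTo hx

lemma mul_sigma_mem_parab (h : GoodSetup cs I J K σ) {u v : W} (hu : u ∈ parab cs I)
    (hv : v ∈ parab cs I) : u * σ v ∈ parab cs (I ∪ J ∪ K) :=
  mul_mem (cs.parab_mono (Set.subset_union_left.trans Set.subset_union_left) hu)
    (cs.parab_mono (Set.subset_union_right.trans Set.subset_union_left) (h.sigma_mem hv))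

lemma sigma_wordProd (h : GoodSetup cs I J K σ) {τ : B → B} (hτ : ∀ i ∈ I, σ (s i) = s (τ i))
    {ω : List B} (hω : ∀ i ∈ ω, i ∈ I) : σ (π ω) = π (ω.map τ) := by
  induction ω with
  | nil => simpa using (h.mulSigma 1 (one_mem _) 1 (one_mem _)).symm
  | cons i ω ih =>
    have hωI : ∀ j ∈ ω, j ∈ I := fun j hj => hω j (List.mem_cons_of_mem i hj)
    have hi : i ∈ I := hω i List.mem_cons_self
    rw [wordProd_cons, h.mulSigma _ (cs.simple_mem_parab hi) _ (cs.wordProd_mem_parab hωI),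
      hτ i hi, ih hωI, List.map_cons, wordProd_cons]

lemma length_sigma (h : GoodSetup cs I J K σ) {x : W} (hx : x ∈ parab cs I) : ℓ (σ x) = ℓ x := by
  classical
  obtain ⟨τ, hτ⟩ : ∃ τ : B → B, ∀ i ∈ I, σ (s i) = s (τ i) :=
    ⟨fun i => if hi : i ∈ I then (h.simpleSigma i hi).choose else i,
      fun i hi => by simpa [hi] using (h.simpleSigma i hi).choose_spec.2⟩
  obtain ⟨ω, hωI, hω, rfl⟩ := cs.exists_reduced_word_of_mem_parab hx
  have hle : ℓ (σ (π ω)) ≤ ℓ (π ω) := by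
    rw [h.sigma_wordProd hτ hωI, hω.eq]
    simpa using cs.length_wordProd_le (ω.map τ)
  -- a reduced word for `σ x` in the letters `τ '' I` lifts through `τ` to a word for `x`
  have hmem : σ (π ω) ∈ parab cs (τ '' I) := by
    rw [h.sigma_wordProd hτ hωI]
    exact cs.wordProd_mem_parab (by simpa using fun i hi => ⟨i, hωI i hi, rfl⟩)
  obtain ⟨υ, hυ, hυred, hυprod⟩ := cs.exists_reduced_word_of_mem_parab hmem
  obtain ⟨ω', hω'I, rfl⟩ := List.exists_map_eq_of_forall_mem_image hυ
  have heq : π ω' = π ω := h.bijSigma.injOn (cs.wordProd_mem_parab hω'I) hx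
    (by rw [h.sigma_wordProd hτ hω'I, hυprod])
  have hge : ℓ (π ω) ≤ ℓ (σ (π ω)) := by
    rw [← hυprod, hυred.eq, List.length_map, ← heq]
    exact cs.length_wordProd_le ω'
  omega

lemma mul_mul_sigma_eq (h : GoodSetup cs I J K σ) (w : W) {a x : W} (ha : a ∈ parab cs K)
    (hx : x ∈ parab cs I) : w * a * (x * σ x) = w * x * σ x * a := by
  have hax : a * x = x * a := Subgroup.mem_centralizer_iff.1
    (cs.parab_le_centralizer h.commIK hx) a ha
  have haσ : a * σ x = σ x * a := Subgroup.mem_centralizer_iff.1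
    (cs.parab_le_centralizer h.commJK (h.sigma_mem hx)) a ha
  simp only [mul_assoc]
  rw [← mul_assoc a x, hax, mul_assoc x a, haσ]

lemma exists_eq_mul_sigma_of_mem_Mset (h : GoodSetup cs I J K σ) {z : W}
    (hz : z ∈ Mset cs I J K σ) (hzL : z ∈ parab cs (I ∪ J ∪ K)) :
    ∃ u ∈ parab cs I, ∃ v ∈ parab cs I, z = u * σ v ∧ ℓ (u * v⁻¹) = ℓ u + ℓ v := by
  obtain ⟨w, hw, ⟨a, ha, x, hx, rfl⟩, hlen⟩ := hz
  have hwL : w ∈ parab cs (I ∪ J ∪ K) := by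
    rw [show w = w * a * (x * σ x) * (x * σ x)⁻¹ * a⁻¹ by group]
    exact mul_mem (mul_mem hzL (inv_mem (h.mul_sigma_mem_parab hx hx)))
      (inv_mem (cs.parab_mono Set.subset_union_right ha))
  obtain ⟨p, hp, q, hq, r, hr, rfl⟩ := h.exists_mul_mul_eq hwL
  rw [h.mul_mul_eq_of_mem_minReps hp hq hr hw] at hlen ⊢
  rw [h.mul_mul_sigma_eq p ha hx, h.length_mul_mul (mul_mem hp hx) (h.sigma_mem hx) ha,
    h.length_sigma hx] at hlen
  have htri := cs.length_le_length_mul_add_right p x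
  have ha1 : a = 1 := cs.length_eq_zero_iff.1 (by omega)
  refine ⟨p * x, mul_mem hp hx, x, hx, by rw [h.mul_mul_sigma_eq p ha hx, ha1, mul_one], ?_⟩
  rw [mul_inv_cancel_right]
  omega

lemma mul_sigma_mem_Mset (h : GoodSetup cs I J K σ) {u v : W} (hu : u ∈ parab cs I)
    (hv : v ∈ parab cs I) (hlen : ℓ (u * v⁻¹) = ℓ u + ℓ v) : u * σ v ∈ Mset cs I J K σ := by
  refine ⟨u * v⁻¹, h.mem_minReps_of_mem_parab (mul_mem hu (inv_mem hv)),
    ⟨1, one_mem _, v, hv, by group⟩, ?_⟩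
  rw [cs.length_mul_of_disjoint_parab
    (h.disjoint_parab_I_JK.mono_right (cs.parab_mono Set.subset_union_left)) hu (h.sigma_mem hv),
    h.length_sigma hv, hlen]

end GoodSetup

theorem statement_9_general (cs : CoxeterSystem M W) (I J K : Set B) (σ : W → W)
    (h : GoodSetup cs I J K σ) (w0I : W)
    (h0 : w0I ∈ parab cs I)
    (hmax : ∀ x ∈ parab cs I, cs.length x ≤ cs.length w0I) :
    Mset cs I J K σ ∩ (parab cs (I ∪ J ∪ K) : Set W) =
      {z : W | ∃ u ∈ parab cs I, ∃ v ∈ parab cs I,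
        z = u * σ v ∧ leR cs u (w0I * v)} := by
  ext z
  constructor
  · rintro ⟨hzM, hzL⟩
    obtain ⟨u, hu, v, hv, rfl, hlen⟩ := h.exists_eq_mul_sigma_of_mem_Mset hzM hzL
    exact ⟨u, hu, v, hv, rfl, (cs.leR_longest_mul_iff h0 hmax hu hv).2 hlen⟩
  · rintro ⟨u, hu, v, hv, rfl, hleR⟩
    exact ⟨h.mul_sigma_mem_Mset hu hv ((cs.leR_longest_mul_iff h0 hmax hu hv).1 hleR),
      h.mul_sigma_mem_parab hu hv⟩

theorem statement_9 (cs : CoxeterSystem M W) (I J K : Set B) (σ : W → W)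
    (h : GoodSetup cs I J K σ) (w0I : W)
    (hfin : (parab cs I : Set W).Finite) (h0 : w0I ∈ parab cs I)
    (hmax : ∀ x ∈ parab cs I, cs.length x ≤ cs.length w0I) :
    Mset cs I J K σ ∩ (parab cs (I ∪ J ∪ K) : Set W) =
      {z : W | ∃ u ∈ parab cs I, ∃ v ∈ parab cs I,
        z = u * σ v ∧ leR cs u (w0I * v)} :=
  statement_9_general cs I J K σ h w0I h0 hmax

end BruhatSetup
end

section
/- Let e be the n×n matrix over a field K with 2r ≤ n given in block form by e = [[0,0,I_r],[0,0,0],[0,0,0]] (blocks of sizes r, n−2r, r). Then the stabilizer of e under conjugation in GL_n(K) is the set of invertible block upper-triangular matrices [[a,*,*],[0,b,*],[0,0,a]] with a ∈ GL_r(K), b ∈ GL_{n−2r}(K), i.e., g e g⁻¹ = e iff g has this form. -/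
open Matrix

/-- The index type for an `n × n` matrix in block form with diagonal blocks of
sizes `r`, `m = n - 2r`, `r`. -/
abbrev BlockIdx (r m : ℕ) := Fin r ⊕ (Fin m ⊕ Fin r)

/-- The 2-nilpotent matrix `e = [[0,0,1_r],[0,0,0],[0,0,0]]` of rank `r`. -/
def eMat (K : Type*) [Field K] (r m : ℕ) : Matrix (BlockIdx r m) (BlockIdx r m) K :=
  fun i j =>
    match i, j with
    | Sum.inl a, Sum.inr (Sum.inr b) => if a = b then 1 else 0
    | _, _ => 0

section Helpers
variable {K : Type*} [Field K] {r m : ℕ}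

lemma e_mul_apply (M : Matrix (BlockIdx r m) (BlockIdx r m) K) (i j : BlockIdx r m) :
    (eMat K r m * M) i j = match i with
      | Sum.inl a => M (Sum.inr (Sum.inr a)) j
      | _ => 0 := by
  cases i with
  | inl a => simp [mul_apply, eMat, Fintype.sum_sum_type, ite_mul]
  | inr x => cases x <;> simp [mul_apply, eMat, Fintype.sum_sum_type]

lemma mul_e_apply (M : Matrix (BlockIdx r m) (BlockIdx r m) K) (i j : BlockIdx r m) :
    (M * eMat K r m) i j = match j with
      | Sum.inr (Sum.inr b) => M i (Sum.inl b)
      | _ => 0 := by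
  rcases j with a | b | c <;>
    simp [mul_apply, eMat, Fintype.sum_sum_type, mul_ite, eq_comm]

lemma comm_iff (M : Matrix (BlockIdx r m) (BlockIdx r m) K) :
    M * eMat K r m = eMat K r m * M ↔
      ((∀ x : Fin m ⊕ Fin r, ∀ a : Fin r, M (Sum.inr x) (Sum.inl a) = 0) ∧
       (∀ y : Fin r, ∀ b : Fin m, M (Sum.inr (Sum.inr y)) (Sum.inr (Sum.inl b)) = 0) ∧
       (∀ a b : Fin r, M (Sum.inl a) (Sum.inl b) = M (Sum.inr (Sum.inr a)) (Sum.inr (Sum.inr b)))) := by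
  rw [← Matrix.ext_iff]
  constructor
  · intro h
    refine ⟨fun x a => ?_, fun y b => ?_, fun a b => ?_⟩
    · have := h (Sum.inr x) (Sum.inr (Sum.inr a))
      rwa [mul_e_apply, e_mul_apply] at this
    · have := h (Sum.inl y) (Sum.inr (Sum.inl b))
      rw [mul_e_apply, e_mul_apply] at this
      exact this.symm
    · have := h (Sum.inl a) (Sum.inr (Sum.inr b))
      rwa [mul_e_apply, e_mul_apply] at this
  · rintro ⟨h1, h2, h3⟩ i j
    rw [mul_e_apply, e_mul_apply]
    rcases i with a | x | y <;> rcases j with b | c | d <;> simp <;>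
      first
        | exact (h1 _ _).symm
        | exact h1 _ _
        | exact h2 _ _
        | exact h3 _ _
        | exact (h2 _ _).symm

end Helpers

theorem statement_16 (K : Type*) [Field K] (r m : ℕ)
    (g : GL (BlockIdx r m) K) :
    ((g : Matrix (BlockIdx r m) (BlockIdx r m) K) * eMat K r m *
        ((g⁻¹ : GL (BlockIdx r m) K) : Matrix (BlockIdx r m) (BlockIdx r m) K) = eMat K r m) ↔
      ((∀ x : Fin m ⊕ Fin r, ∀ a : Fin r,
          (↑g : Matrix (BlockIdx r m) (BlockIdx r m) K) (Sum.inr x) (Sum.inl a) = 0) ∧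
       (∀ y : Fin r, ∀ b : Fin m,
          (↑g : Matrix (BlockIdx r m) (BlockIdx r m) K)
            (Sum.inr (Sum.inr y)) (Sum.inr (Sum.inl b)) = 0) ∧
       (∀ a b : Fin r,
          (↑g : Matrix (BlockIdx r m) (BlockIdx r m) K) (Sum.inl a) (Sum.inl b) =
          (↑g : Matrix (BlockIdx r m) (BlockIdx r m) K)
            (Sum.inr (Sum.inr a)) (Sum.inr (Sum.inr b))) ∧
       IsUnit (Matrix.of fun a b : Fin r =>
          (↑g : Matrix (BlockIdx r m) (BlockIdx r m) K) (Sum.inl a) (Sum.inl b)) ∧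
       IsUnit (Matrix.of fun a b : Fin m =>
          (↑g : Matrix (BlockIdx r m) (BlockIdx r m) K)
            (Sum.inr (Sum.inl a)) (Sum.inr (Sum.inl b)))) := by
  have hinv1 : ((g⁻¹ : GL (BlockIdx r m) K) : Matrix (BlockIdx r m) (BlockIdx r m) K) *
      (↑g : Matrix (BlockIdx r m) (BlockIdx r m) K) = 1 := by
    rw [← Units.val_mul]
    simp
  have hinv2 : (↑g : Matrix (BlockIdx r m) (BlockIdx r m) K) *
      ((g⁻¹ : GL (BlockIdx r m) K) : Matrix (BlockIdx r m) (BlockIdx r m) K) = 1 := by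
    rw [← Units.val_mul]
    simp
  have key : ((↑g : Matrix (BlockIdx r m) (BlockIdx r m) K) * eMat K r m *
      ((g⁻¹ : GL (BlockIdx r m) K) : Matrix (BlockIdx r m) (BlockIdx r m) K) = eMat K r m) ↔
      ((↑g : Matrix (BlockIdx r m) (BlockIdx r m) K) * eMat K r m =
        eMat K r m * (↑g : Matrix (BlockIdx r m) (BlockIdx r m) K)) := by
    constructor
    · intro h
      have h2 : (↑g : Matrix (BlockIdx r m) (BlockIdx r m) K) * eMat K r m *
          ((g⁻¹ : GL (BlockIdx r m) K) : Matrix (BlockIdx r m) (BlockIdx r m) K) *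
          (↑g : Matrix (BlockIdx r m) (BlockIdx r m) K) =
          eMat K r m * (↑g : Matrix (BlockIdx r m) (BlockIdx r m) K) := by rw [h]
      rwa [mul_assoc (_ * eMat K r m), hinv1, mul_one] at h2
    · intro h
      rw [h, mul_assoc, hinv2, mul_one]
  rw [key, comm_iff]
  constructor
  · rintro ⟨h1, h2, h3⟩
    refine ⟨h1, h2, h3, ?_, ?_⟩ <;>
    · set A : Matrix (Fin r) (Fin r) K := Matrix.of fun a b : Fin r =>
        (↑g : Matrix (BlockIdx r m) (BlockIdx r m) K) (Sum.inl a) (Sum.inl b) with hA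
      set B : Matrix (Fin m) (Fin m) K := Matrix.of fun a b : Fin m =>
        (↑g : Matrix (BlockIdx r m) (BlockIdx r m) K)
          (Sum.inr (Sum.inl a)) (Sum.inr (Sum.inl b)) with hB
      have hdetg : IsUnit (↑g : Matrix (BlockIdx r m) (BlockIdx r m) K).det :=
        (Matrix.isUnit_iff_isUnit_det _).mp g.isUnit
      have h21 : (↑g : Matrix (BlockIdx r m) (BlockIdx r m) K).toBlocks₂₁ = 0 := by
        ext x a; exact h1 x a
      have hD21 : (↑g : Matrix (BlockIdx r m) (BlockIdx r m) K).toBlocks₂₂.toBlocks₂₁ = 0 := by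
        ext y b; exact h2 y b
      have hAeq : (↑g : Matrix (BlockIdx r m) (BlockIdx r m) K).toBlocks₁₁ = A := rfl
      have hBeq : (↑g : Matrix (BlockIdx r m) (BlockIdx r m) K).toBlocks₂₂.toBlocks₁₁ = B := rfl
      have hA'eq : (↑g : Matrix (BlockIdx r m) (BlockIdx r m) K).toBlocks₂₂.toBlocks₂₂ = A := by
        ext a b
        exact (h3 a b).symm
      have hkey : (↑g : Matrix (BlockIdx r m) (BlockIdx r m) K).det =
          A.det * (B.det * A.det) := by
        conv_lhs => rw [← Matrix.fromBlocks_toBlocks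
          (↑g : Matrix (BlockIdx r m) (BlockIdx r m) K), h21]
        rw [Matrix.det_fromBlocks_zero₂₁, hAeq]
        congr 1
        conv_lhs => rw [← Matrix.fromBlocks_toBlocks
          (↑g : Matrix (BlockIdx r m) (BlockIdx r m) K).toBlocks₂₂, hD21]
        rw [Matrix.det_fromBlocks_zero₂₁, hBeq, hA'eq]
      rw [hkey] at hdetg
      first
        | exact (Matrix.isUnit_iff_isUnit_det A).mpr (isUnit_of_mul_isUnit_left hdetg)
        | exact (Matrix.isUnit_iff_isUnit_det B).mpr
            (isUnit_of_mul_isUnit_left (isUnit_of_mul_isUnit_right hdetg))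
  · rintro ⟨h1, h2, h3, -, -⟩
    exact ⟨h1, h2, h3⟩
end
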